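/- Let G be a finite group acting unitarily on H_R and H_S, τ a density matrix on H_R, σ a density matrix on H_S, and let Σ^{CRS} = (1/|G|)·Σ_{g∈G} |g⟩⟨g|^C ⊗ U_g^R τ (U_g^R)† ⊗ U_g^S σ (U_g^S)† be the classical-quantum state on C⊗R⊗S where {|g⟩ : g∈G} is an orthonormal basis of ℂ^{|G|}. Then the mutual information I(C:R)_Σ between C and R equals Γ(τ) = S(𝒢(τ)) - S(τ). -/

import Mathlib

open Matrix
open scoped Kronecker ComplexOrder
open scoped Classical

variable {n : Type*} [Fintype n] [DecidableEq n]

/-- Density matrix predicate -/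
def IsDensityMatrix (ρ : Matrix n n ℂ) : Prop := ρ.PosSemidef ∧ ρ.trace = 1

/-- von Neumann entropy, base 2 -/
noncomputable def vnEntropy (A : Matrix n n ℂ) : ℝ :=
  if h : A.IsHermitian then -∑ i, h.eigenvalues i * Real.logb 2 (h.eigenvalues i) else 0

/-- twirl over a finite group -/
noncomputable def twirl {G : Type*} [Group G] [Fintype G]
    (U : G →* Matrix.unitaryGroup n ℂ) (ρ : Matrix n n ℂ) : Matrix n n ℂ :=
  (Fintype.card G : ℂ)⁻¹ • ∑ g : G, (U g : Matrix n n ℂ) * ρ * star (U g : Matrix n n ℂ)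

/-- relative entropy of asymmetry -/
noncomputable def relEntAsym {G : Type*} [Group G] [Fintype G]
    (U : G →* Matrix.unitaryGroup n ℂ) (ρ : Matrix n n ℂ) : ℝ :=
  vnEntropy (twirl U ρ) - vnEntropy ρ

/-- the square root of a PSD matrix, as `Matrix.PosSemidef.sqrt` was defined in Mathlib (Dec 2024) -/
noncomputable def Matrix.PosSemidef.sqrt {m : Type*} [Fintype m] [DecidableEq m] {𝕜 : Type*} [RCLike 𝕜]
    {A : Matrix m m 𝕜} (hA : A.PosSemidef) : Matrix m m 𝕜 :=
  (hA.1.eigenvectorUnitary : Matrix m m 𝕜) * diagonal ((↑) ∘ (√·) ∘ hA.1.eigenvalues) *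
    (star hA.1.eigenvectorUnitary : Matrix m m 𝕜)

/-- square root of a PSD matrix (0 otherwise) -/
noncomputable def sqrtPSD (A : Matrix n n ℂ) : Matrix n n ℂ :=
  if h : A.PosSemidef then h.sqrt else 0

/-- trace norm -/
noncomputable def traceNorm (A : Matrix n n ℂ) : ℝ :=
  ((Matrix.posSemidef_conjTranspose_mul_self A).sqrt.trace).re

/-- fidelity F(ρ,σ) = ‖√ρ√σ‖₁ -/
noncomputable def fidelity (ρ σ : Matrix n n ℂ) : ℝ := traceNorm (sqrtPSD ρ * sqrtPSD σ)

/-- binary entropy, base 2 -/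
noncomputable def binEntropy2 (x : ℝ) : ℝ := -x * Real.logb 2 x - (1-x) * Real.logb 2 (1-x)

/-- matrix logarithm (base 2) of a Hermitian matrix -/
noncomputable def matLogb (A : Matrix n n ℂ) : Matrix n n ℂ :=
  if h : A.IsHermitian then
    (h.eigenvectorUnitary : Matrix n n ℂ) *
      Matrix.diagonal (fun i => (Real.logb 2 (h.eigenvalues i) : ℂ)) *
      star (h.eigenvectorUnitary : Matrix n n ℂ)
  else 0

/-- quantum relative entropy, +∞ if support condition fails -/
noncomputable def relEntropy (ρ σ : Matrix n n ℂ) : EReal :=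
  if ∀ v : n → ℂ, σ *ᵥ v = 0 → ρ *ᵥ v = 0 then
    (((ρ * (matLogb ρ - matLogb σ)).trace).re : EReal)
  else ⊤

/-- complete positivity -/
def IsCompletelyPositive {m : Type*} [Fintype m] [DecidableEq m]
    (Φ : Matrix n n ℂ →ₗ[ℂ] Matrix m m ℂ) : Prop :=
  ∀ (k : ℕ) (M : Matrix (Fin k × n) (Fin k × n) ℂ), M.PosSemidef →
    (Matrix.of fun p q : Fin k × m =>
      (Φ (Matrix.of fun a b => M (p.1, a) (q.1, b))) p.2 q.2).PosSemidef

/-- CPTP map -/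
def IsQuantumChannel {m : Type*} [Fintype m] [DecidableEq m]
    (Φ : Matrix n n ℂ →ₗ[ℂ] Matrix m m ℂ) : Prop :=
  IsCompletelyPositive Φ ∧ ∀ A, (Φ A).trace = A.trace

/-- G-covariance of a map between systems with representations U, V -/
def IsCovariant {m : Type*} [Fintype m] [DecidableEq m] {G : Type*} [Group G]
    (U : G →* Matrix.unitaryGroup n ℂ) (V : G →* Matrix.unitaryGroup m ℂ)
    (Φ : Matrix n n ℂ →ₗ[ℂ] Matrix m m ℂ) : Prop :=
  ∀ g A, Φ ((U g : Matrix n n ℂ) * A * star (U g : Matrix n n ℂ))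
    = (V g : Matrix m m ℂ) * Φ A * star (V g : Matrix m m ℂ)

/-- the classical-quantum state Σ^{CRS} -/
noncomputable def SigmaCRS {nR nS G : Type*} [Fintype nR] [DecidableEq nR] [Fintype nS] [DecidableEq nS]
    [Group G] [Fintype G] [DecidableEq G]
    (U : G →* Matrix.unitaryGroup nR ℂ) (V : G →* Matrix.unitaryGroup nS ℂ)
    (τ : Matrix nR nR ℂ) (σ : Matrix nS nS ℂ) :
    Matrix (G × nR × nS) (G × nR × nS) ℂ :=
  Matrix.of fun x y =>
    if x.1 = y.1 then
      (Fintype.card G : ℂ)⁻¹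
        * (((U x.1 : Matrix nR nR ℂ) * τ * star (U x.1 : Matrix nR nR ℂ)) x.2.1 y.2.1)
        * (((V x.1 : Matrix nS nS ℂ) * σ * star (V x.1 : Matrix nS nS ℂ)) x.2.2 y.2.2)
    else 0


/-!
Tracing out `S` leaves on `CR` the block-diagonal state `⊕_g |G|⁻¹ U_g τ U_g†`. Conjugating by the
controlled unitary `Σ_g |g⟩⟨g| ⊗ U_g` turns it into the product state `(𝟙/|G|) ⊗ τ`, whose entropy
is `S(𝟙/|G|) + S(τ)` by additivity of the von Neumann entropy. The marginals on `C` and `R` are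
`𝟙/|G|` and the twirl `𝒢(τ)`, so `I(C:R) = S(𝟙/|G|) + S(𝒢(τ)) - S(𝟙/|G|) - S(τ)`.
-/

theorem Matrix.IsHermitian.kronecker {α m n : Type*} [CommMagma α] [StarMul α]
    {A : Matrix m m α} {B : Matrix n n α} (hA : A.IsHermitian) (hB : B.IsHermitian) :
    (A ⊗ₖ B).IsHermitian := by
  rw [IsHermitian, conjTranspose_kronecker, hA.eq, hB.eq]

section Entropy

variable {n m : Type*} [Fintype n] [DecidableEq n] [Fintype m] [DecidableEq m]

theorem Matrix.IsHermitian.vnEntropy_eq {A : Matrix n n ℂ} (hA : A.IsHermitian) :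
    vnEntropy A = -∑ i, hA.eigenvalues i * Real.logb 2 (hA.eigenvalues i) :=
  dif_pos hA

theorem Matrix.IsHermitian.sum_eigenvalues_eq_one {A : Matrix n n ℂ} (hA : A.IsHermitian)
    (htr : A.trace = 1) : ∑ i, hA.eigenvalues i = 1 := by
  have h := hA.trace_eq_sum_eigenvalues
  rw [htr] at h
  simpa using (congrArg Complex.re h).symm

theorem trace_unitary_conj {A W : Matrix n n ℂ} (hW : W ∈ unitaryGroup n ℂ) :
    (W * A * star W).trace = A.trace := by
  rw [trace_mul_cycle, Unitary.star_mul_self_of_mem hW, Matrix.one_mul]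

theorem vnEntropy_unitary_conj {A W : Matrix n n ℂ} (hA : A.IsHermitian)
    (hW : W ∈ unitaryGroup n ℂ) : vnEntropy (W * A * star W) = vnEntropy A := by
  have hWA : (W * A * star W).IsHermitian := isHermitian_mul_mul_conjTranspose _ hA
  have hchar : (W * A * star W).charpoly = A.charpoly := by
    rw [charpoly_mul_comm, ← Matrix.mul_assoc, Unitary.star_mul_self_of_mem hW, Matrix.one_mul]
  rw [hWA.vnEntropy_eq, hA.vnEntropy_eq, (hWA.eigenvalues_eq_eigenvalues_iff hA).2 hchar]

open Polynomial in
theorem vnEntropy_diagonal (d : n → ℝ) :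
    vnEntropy (diagonal fun i => (d i : ℂ)) = -∑ i, d i * Real.logb 2 (d i) := by
  have hD : (diagonal fun i => (d i : ℂ)).IsHermitian :=
    isHermitian_diagonal_iff.2 fun i => Complex.conj_ofReal (d i)
  have hroots : (Finset.univ.val.map hD.eigenvalues).map ((↑) : ℝ → ℂ)
      = (Finset.univ.val.map d).map ((↑) : ℝ → ℂ) := by
    rw [Multiset.map_map, Multiset.map_map]
    refine hD.roots_charpoly_eq_eigenvalues.symm.trans ?_
    rw [charpoly_diagonal, Finset.prod_eq_multiset_prod]
    simpa only [Multiset.map_map, Function.comp_def] using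
      roots_multiset_prod_X_sub_C (Finset.univ.val.map fun i => (d i : ℂ))
  have hspec := Multiset.map_injective Complex.ofReal_injective hroots
  rw [hD.vnEntropy_eq]
  simpa only [Multiset.map_map, Function.comp_def, Finset.sum_map_val] using
    congrArg (fun s => -(s.map fun x => x * Real.logb 2 x).sum) hspec

-- No positivity hypotheses are needed: both sides vanish when `x = 0` or `y = 0`.
theorem mul_mul_logb_mul (b x y : ℝ) :
    x * y * Real.logb b (x * y) = y * (x * Real.logb b x) + x * (y * Real.logb b y) := by
  rcases eq_or_ne x 0 with rfl | hx
  · simp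
  rcases eq_or_ne y 0 with rfl | hy
  · simp
  rw [Real.logb_mul hx hy]
  ring

theorem sum_mul_mul_logb_mul {ι κ : Type*} [Fintype ι] [Fintype κ] (b : ℝ) {p : ι → ℝ}
    {q : κ → ℝ} (hp : ∑ i, p i = 1) (hq : ∑ j, q j = 1) :
    ∑ x : ι × κ, p x.1 * q x.2 * Real.logb b (p x.1 * q x.2)
      = ∑ i, p i * Real.logb b (p i) + ∑ j, q j * Real.logb b (q j) := by
  simp only [mul_mul_logb_mul, Fintype.sum_prod_type, Finset.sum_add_distrib, ← Finset.sum_mul,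
    ← Finset.mul_sum, hp, hq, one_mul]

theorem vnEntropy_kronecker {A : Matrix n n ℂ} {B : Matrix m m ℂ} (hA : A.IsHermitian)
    (hB : B.IsHermitian) (htrA : A.trace = 1) (htrB : B.trace = 1) :
    vnEntropy (A ⊗ₖ B) = vnEntropy A + vnEntropy B := by
  have hW := kronecker_mem_unitary hA.eigenvectorUnitary.2 hB.eigenvectorUnitary.2
  have hAB : A ⊗ₖ B = ((hA.eigenvectorUnitary : Matrix n n ℂ) ⊗ₖ hB.eigenvectorUnitary)
      * diagonal (fun p => ((hA.eigenvalues p.1 * hB.eigenvalues p.2 : ℝ) : ℂ))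
      * star ((hA.eigenvectorUnitary : Matrix n n ℂ) ⊗ₖ hB.eigenvectorUnitary) := by
    conv_lhs => rw [hA.spectral_theorem, hB.spectral_theorem]
    simp only [Unitary.conjStarAlgAut_apply, star_eq_conjTranspose, conjTranspose_kronecker,
      mul_kronecker_mul, diagonal_kronecker_diagonal, Function.comp_apply]
    push_cast
    rfl
  rw [hAB, vnEntropy_unitary_conj _ hW, vnEntropy_diagonal, sum_mul_mul_logb_mul 2
    (hA.sum_eigenvalues_eq_one htrA) (hB.sum_eigenvalues_eq_one htrB), hA.vnEntropy_eq,
    hB.vnEntropy_eq, neg_add]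
  exact isHermitian_diagonal_iff.2 fun p => Complex.conj_ofReal _

end Entropy

/- Mathlib's `blockDiagonal` puts the block index second; reindexing by `Prod.swap` puts it
first, so `(blockDiagonal W).submatrix Prod.swap Prod.swap` is the controlled unitary
`Σ_k |k⟩⟨k| ⊗ W k`. -/
section ControlledUnitary

variable {o m α : Type*} [DecidableEq o]

theorem diagonal_kronecker_eq_submatrix_blockDiagonal [CommSemiring α] (d : o → α)
    (A : Matrix m m α) :
    diagonal d ⊗ₖ A = (blockDiagonal fun k => d k • A).submatrix Prod.swap Prod.swap := by
  ext ⟨k, i⟩ ⟨k', j⟩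
  by_cases h : k = k' <;> simp [blockDiagonal_apply, h]

theorem submatrix_blockDiagonal_mem_unitaryGroup [Fintype o] [Fintype m] [DecidableEq m]
    [CommRing α] [StarRing α] {W : o → Matrix m m α} (hW : ∀ k, W k ∈ unitaryGroup m α) :
    (blockDiagonal W).submatrix Prod.swap Prod.swap ∈ unitaryGroup (o × m) α := by
  rw [mem_unitaryGroup_iff, star_eq_conjTranspose, conjTranspose_submatrix,
    blockDiagonal_conjTranspose, ← submatrix_mul _ _ _ _ _ Prod.swap_bijective,
    ← blockDiagonal_mul]
  simp only [← star_eq_conjTranspose, Unitary.mul_star_self_of_mem (hW _)]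
  exact (congrArg (submatrix · _ _) blockDiagonal_one).trans (submatrix_one _ Prod.swap_injective)

theorem submatrix_blockDiagonal_smul_conj [Fintype o] [Fintype m] [CommSemiring α] [StarRing α]
    (W : o → Matrix m m α) (d : o → α) (A : Matrix m m α) :
    (blockDiagonal fun k => d k • (W k * A * star (W k))).submatrix Prod.swap Prod.swap
      = (blockDiagonal W).submatrix Prod.swap Prod.swap * (diagonal d ⊗ₖ A)
        * star ((blockDiagonal W).submatrix Prod.swap Prod.swap) := by
  rw [diagonal_kronecker_eq_submatrix_blockDiagonal, star_eq_conjTranspose, conjTranspose_submatrix,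
    blockDiagonal_conjTranspose, ← submatrix_mul _ _ _ _ _ Prod.swap_bijective,
    ← submatrix_mul _ _ _ _ _ Prod.swap_bijective, ← blockDiagonal_mul, ← blockDiagonal_mul]
  simp only [mul_smul_comm, smul_mul_assoc, star_eq_conjTranspose]

end ControlledUnitary

section SigmaCRS

variable {nR nS G : Type*} [Fintype nR] [DecidableEq nR] [Fintype nS] [DecidableEq nS]
  [Group G] [Fintype G] [DecidableEq G]
  (U : G →* unitaryGroup nR ℂ) (V : G →* unitaryGroup nS ℂ) (τ : Matrix nR nR ℂ)
  {σ : Matrix nS nS ℂ}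

theorem sum_sigmaCRS_apply (hσ : σ.trace = 1) (g g' : G) (r r' : nR) :
    ∑ s, SigmaCRS U V τ σ (g, r, s) (g', r', s)
      = if g = g' then (Fintype.card G : ℂ)⁻¹
          * ((U g : Matrix nR nR ℂ) * τ * star (U g : Matrix nR nR ℂ)) r r' else 0 := by
  simp only [SigmaCRS, of_apply]
  split_ifs
  · have htr : ∑ s, ((V g : Matrix nS nS ℂ) * σ * star (V g : Matrix nS nS ℂ)) s s = 1 :=
      (trace_unitary_conj (V g).2).trans hσ
    rw [← Finset.mul_sum, htr, mul_one]
  · exact Finset.sum_const_zero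

theorem sigmaCRS_marginal_C (hτ : τ.trace = 1) (hσ : σ.trace = 1) :
    (of fun g g' : G => ∑ r : nR, ∑ s : nS, SigmaCRS U V τ σ (g, r, s) (g', r, s))
      = diagonal fun _ => (Fintype.card G : ℂ)⁻¹ := by
  ext g g'
  simp only [of_apply, sum_sigmaCRS_apply U V τ hσ, diagonal_apply]
  split_ifs with h
  · have htr : ∑ r, ((U g : Matrix nR nR ℂ) * τ * star (U g : Matrix nR nR ℂ)) r r = 1 :=
      (trace_unitary_conj (U g).2).trans hτ
    rw [← Finset.mul_sum, htr, mul_one]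
  · exact Finset.sum_const_zero

theorem sigmaCRS_marginal_R (hσ : σ.trace = 1) :
    (of fun r r' : nR => ∑ g : G, ∑ s : nS, SigmaCRS U V τ σ (g, r, s) (g, r', s))
      = twirl U τ := by
  ext r r'
  simp [sum_sigmaCRS_apply U V τ hσ, twirl, Matrix.sum_apply, Finset.mul_sum]

theorem sigmaCRS_marginal_CR (hσ : σ.trace = 1) :
    (of fun p q : G × nR => ∑ s : nS, SigmaCRS U V τ σ (p.1, p.2, s) (q.1, q.2, s))
      = (blockDiagonal fun g => (U g : Matrix nR nR ℂ)).submatrix Prod.swap Prod.swap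
        * (diagonal (fun _ => (Fintype.card G : ℂ)⁻¹) ⊗ₖ τ)
        * star ((blockDiagonal fun g => (U g : Matrix nR nR ℂ)).submatrix Prod.swap Prod.swap) := by
  rw [← submatrix_blockDiagonal_smul_conj]
  ext ⟨g, r⟩ ⟨g', r'⟩
  simp [sum_sigmaCRS_apply U V τ hσ, blockDiagonal_apply]

end SigmaCRS

theorem mutualInfo_CR_eq_relEntAsym {nR nS G : Type*} [Fintype nR] [DecidableEq nR]
    [Fintype nS] [DecidableEq nS] [Group G] [Fintype G] [DecidableEq G]
    (U : G →* Matrix.unitaryGroup nR ℂ) (V : G →* Matrix.unitaryGroup nS ℂ)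
    (τ : Matrix nR nR ℂ) (σ : Matrix nS nS ℂ)
    (hτ : IsDensityMatrix τ) (hσ : IsDensityMatrix σ) :
    vnEntropy (Matrix.of fun g g' : G => ∑ r : nR, ∑ s : nS,
        SigmaCRS U V τ σ (g, r, s) (g', r, s))
      + vnEntropy (Matrix.of fun r r' : nR => ∑ g : G, ∑ s : nS,
        SigmaCRS U V τ σ (g, r, s) (g, r', s))
      - vnEntropy (Matrix.of fun p q : G × nR => ∑ s : nS,
        SigmaCRS U V τ σ (p.1, p.2, s) (q.1, q.2, s))
      = relEntAsym U τ := by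
  have hD : (diagonal fun _ : G => (Fintype.card G : ℂ)⁻¹).IsHermitian :=
    isHermitian_diagonal_iff.2 fun _ => by simp
  have htrD : (diagonal fun _ : G => (Fintype.card G : ℂ)⁻¹).trace = 1 := by
    simp [trace_diagonal]
  rw [sigmaCRS_marginal_C U V τ hτ.2 hσ.2, sigmaCRS_marginal_R U V τ hσ.2,
    sigmaCRS_marginal_CR U V τ hσ.2,
    vnEntropy_unitary_conj (hD.kronecker hτ.1.1)
      (submatrix_blockDiagonal_mem_unitaryGroup fun g => (U g).2),
    vnEntropy_kronecker hD hτ.1.1 htrD hτ.2, relEntAsym]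
  ring
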